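/- (Theorem 3.1, right eigenvalue part) Let (H,J,K) and (H̃,J̃,K̃) be two triples of 4×4 real matrices, each satisfying the Hamiltonian conditions (H² = J² = K² = HJK = −E and H̃² = J̃² = K̃² = H̃J̃K̃ = −E), with associated maps Q, P and Q̃, P̃ respectively. Let A, B ∈ ℍ^{m×m} satisfy P(A) = P̃(B), and let λ, γ ∈ ℍ satisfy Q(λ) = Q̃(γ). If λ is a right eigenvalue of A, then γ is a right eigenvalue of B. -/

import Mathlib

open Matrix

/-- The real `4×4` matrix representation of a quaternion determined by matrices
`H, J, K` (assumed to satisfy the Hamiltonian conditions). -/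
noncomputable def qRep (H J K : Matrix (Fin 4) (Fin 4) ℝ) (q : Quaternion ℝ) :
    Matrix (Fin 4) (Fin 4) ℝ :=
  q.re • (1 : Matrix (Fin 4) (Fin 4) ℝ) + q.imI • H + q.imJ • J + q.imK • K

/-- The block real matrix representation of a quaternion matrix: the `(s,t)` block
of `pRep H J K A` is `qRep H J K (A s t)`. -/
noncomputable def pRep (H J K : Matrix (Fin 4) (Fin 4) ℝ) {m n : ℕ}
    (A : Matrix (Fin m) (Fin n) (Quaternion ℝ)) :
    Matrix (Fin m × Fin 4) (Fin n × Fin 4) ℝ :=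
  Matrix.of fun p q => qRep H J K (A p.1 q.1) p.2 q.2

/-- `λ` is a left eigenvalue of `A` if `A v = λ v` for some nonzero `v`. -/
def IsLeftEigenvalue {m : ℕ} (A : Matrix (Fin m) (Fin m) (Quaternion ℝ))
    (l : Quaternion ℝ) : Prop :=
  ∃ v : Fin m → Quaternion ℝ, v ≠ 0 ∧ A.mulVec v = l • v

/-- `λ` is a right eigenvalue of `A` if `A v = v λ` for some nonzero `v`. -/
def IsRightEigenvalue {m : ℕ} (A : Matrix (Fin m) (Fin m) (Quaternion ℝ))
    (l : Quaternion ℝ) : Prop :=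
  ∃ v : Fin m → Quaternion ℝ, v ≠ 0 ∧ A.mulVec v = fun s => v s * l

/-!
Under the Hamiltonian conditions `Q` and `Q̃` are injective `ℝ`-algebra maps `ℍ → ℝ^{4×4}`.
Transport along the isomorphism `ℍ ≅ ℝ⁴`, `q ↦ Q̃(q) 𝟙`, is an algebra isomorphism
`ρ : ℝ^{4×4} ≅ End_ℝ ℍ` sending `Q̃(q)` to the left multiplication `L_q`. For an eigenvector `v`
of `A` the nonzero family `F_t = ρ(Q(v_t))` then satisfies `∑_t L_{b_st} F_t = F_s L_γ`, an
eigen-equation for `B` with coefficients in `End_ℝ ℍ`. The sandwich `f ↦ ∑_e f(e) c ē` over the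
basis `e = 1, i, j, k` commutes with left multiplications and turns `f L_γ` into `(·) γ`, so for a
suitable `c` it maps `F` to a nonzero `w` with `B w = w γ`.
-/

open Quaternion

noncomputable section

section Hamilton

variable {A : Type*} [Ring A] {H J K : A}

theorem hamilton_i_mul_j (hK : K * K = -1) (hHJK : H * J * K = -1) : H * J = K := by
  calc H * J = -(H * J * (K * K)) := by rw [hK]; simp
    _ = K := by rw [← mul_assoc, hHJK]; simp

theorem hamilton_j_mul_i (hH : H * H = -1) (hJ : J * J = -1) (hK : K * K = -1)
    (hHJK : H * J * K = -1) : J * H = -K := by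
  have hHJHJ : H * (J * H * J) = -1 := by
    rw [← hK, ← hamilton_i_mul_j hK hHJK]; noncomm_ring
  have hJHJ : J * H * J = H := by
    calc J * H * J = -(H * H * (J * H * J)) := by rw [hH]; simp
      _ = H := by rw [mul_assoc, hHJHJ]; simp
  calc J * H = -(J * H * J * J) := by rw [mul_assoc _ J J, hJ]; simp
    _ = -K := by rw [hJHJ, hamilton_i_mul_j hK hHJK]

variable [Algebra ℝ A]

def hamiltonBasis (hH : H * H = -1) (hJ : J * J = -1) (hK : K * K = -1)
    (hHJK : H * J * K = -1) : QuaternionAlgebra.Basis A (-1 : ℝ) 0 (-1) where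
  i := H
  j := J
  k := K
  i_mul_i := by rw [hH]; simp
  j_mul_j := by rw [hJ]; simp
  i_mul_j := hamilton_i_mul_j hK hHJK
  j_mul_i := by rw [hamilton_j_mul_i hH hJ hK hHJK]; simp

end Hamilton

variable {H J K : Matrix (Fin 4) (Fin 4) ℝ}

def qRepAlgHom (hH : H * H = -1) (hJ : J * J = -1) (hK : K * K = -1)
    (hHJK : H * J * K = -1) : ℍ[ℝ] →ₐ[ℝ] Matrix (Fin 4) (Fin 4) ℝ :=
  (hamiltonBasis hH hJ hK hHJK).liftHom

theorem coe_qRepAlgHom (hH : H * H = -1) (hJ : J * J = -1) (hK : K * K = -1)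
    (hHJK : H * J * K = -1) : ⇑(qRepAlgHom hH hJ hK hHJK) = qRep H J K := by
  ext1 q
  change algebraMap ℝ _ q.re + q.imI • H + q.imJ • J + q.imK • K = _
  rw [Algebra.algebraMap_eq_smul_one]
  rfl

theorem qRep_eq_of_pRep_eq {H' J' K' : Matrix (Fin 4) (Fin 4) ℝ} {m n : ℕ}
    {A : Matrix (Fin m) (Fin n) ℍ[ℝ]} {B : Matrix (Fin m) (Fin n) ℍ[ℝ]}
    (hAB : pRep H J K A = pRep H' J' K' B) (s : Fin m) (t : Fin n) :
    qRep H J K (A s t) = qRep H' J' K' (B s t) := by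
  ext p q
  exact congr_fun₂ hAB (s, p) (t, q)

section Orbit

variable (φ : ℍ[ℝ] →ₐ[ℝ] Matrix (Fin 4) (Fin 4) ℝ) {x : Fin 4 → ℝ}

def orbitMap (x : Fin 4 → ℝ) : ℍ[ℝ] →ₗ[ℝ] (Fin 4 → ℝ) where
  toFun q := φ q *ᵥ x
  map_add' p q := by rw [map_add, add_mulVec]
  map_smul' r q := by rw [map_smul, smul_mulVec, RingHom.id_apply]

theorem orbitMap_injective (hx : x ≠ 0) : Function.Injective (orbitMap φ x) := by
  refine (injective_iff_map_eq_zero _).mpr fun q hq => ?_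
  by_contra hq0
  apply hx
  calc x = φ (q⁻¹ * q) *ᵥ x := by rw [inv_mul_cancel₀ hq0, map_one, one_mulVec]
    _ = 0 := by rw [map_mul, ← mulVec_mulVec]; exact (congrArg _ hq).trans (mulVec_zero _)

theorem orbitMap_bijective (hx : x ≠ 0) : Function.Bijective (orbitMap φ x) := by
  have hrank : Module.finrank ℝ ℍ[ℝ] = Module.finrank ℝ (Fin 4 → ℝ) := by
    rw [Quaternion.finrank_eq_four, Module.finrank_fin_fun]
  have hinj := orbitMap_injective φ hx
  exact ⟨hinj, (LinearMap.injective_iff_surjective_of_finrank_eq_finrank hrank).mp hinj⟩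

def orbitEquiv (hx : x ≠ 0) : ℍ[ℝ] ≃ₗ[ℝ] (Fin 4 → ℝ) :=
  LinearEquiv.ofBijective (orbitMap φ x) (orbitMap_bijective φ hx)

theorem orbitEquiv_mul (hx : x ≠ 0) (p q : ℍ[ℝ]) :
    orbitEquiv φ hx (p * q) = φ p *ᵥ orbitEquiv φ hx q := by
  simp [orbitEquiv, orbitMap, mulVec_mulVec]

def matrixEndEquiv (hx : x ≠ 0) : Matrix (Fin 4) (Fin 4) ℝ ≃ₐ[ℝ] Module.End ℝ ℍ[ℝ] :=
  Matrix.toLinAlgEquiv'.trans ((orbitEquiv φ hx).symm.conjAlgEquiv ℝ)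

theorem matrixEndEquiv_apply_map (hx : x ≠ 0) (q : ℍ[ℝ]) :
    matrixEndEquiv φ hx (φ q) = LinearMap.mulLeft ℝ q := by
  ext y : 1
  apply (orbitEquiv φ hx).injective
  simp [matrixEndEquiv, LinearEquiv.conjAlgEquiv_apply, orbitEquiv_mul]

end Orbit

@[simps] def quatI : ℍ[ℝ] := ⟨0, 1, 0, 0⟩
@[simps] def quatJ : ℍ[ℝ] := ⟨0, 0, 1, 0⟩
@[simps] def quatK : ℍ[ℝ] := ⟨0, 0, 0, 1⟩

theorem eq_re_smul_one_add_im_smul (q : ℍ[ℝ]) :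
    q = q.re • 1 + q.imI • quatI + q.imJ • quatJ + q.imK • quatK := by
  ext <;> simp

theorem LinearMap.apply_quaternion (f : ℍ[ℝ] →ₗ[ℝ] ℍ[ℝ]) (q : ℍ[ℝ]) :
    f q = q.re • f 1 + q.imI • f quatI + q.imJ • f quatJ + q.imK • f quatK := by
  conv_lhs => rw [eq_re_smul_one_add_im_smul q]
  simp only [map_add, map_smul]

def sandwich (c : ℍ[ℝ]) : Module.End ℝ ℍ[ℝ] →+ ℍ[ℝ] where
  toFun f := f 1 * c - f quatI * c * quatI - f quatJ * c * quatJ - f quatK * c * quatK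
  map_zero' := by simp
  map_add' f g := by simp only [LinearMap.add_apply]; noncomm_ring

theorem sandwich_apply (c : ℍ[ℝ]) (f : Module.End ℝ ℍ[ℝ]) :
    sandwich c f = f 1 * c - f quatI * c * quatI - f quatJ * c * quatJ - f quatK * c * quatK := rfl

theorem sandwich_mulLeft_mul (c b : ℍ[ℝ]) (f : Module.End ℝ ℍ[ℝ]) :
    sandwich c (LinearMap.mulLeft ℝ b * f) = b * sandwich c f := by
  simp only [sandwich_apply, Module.End.mul_apply, LinearMap.mulLeft_apply]
  noncomm_ring

-- Expanding `f (γ e)` in the basis, this is `∑_e (γ e)_d ē = d̄ γ` for each basis element `d`.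
theorem sandwich_mul_mulLeft (c γ : ℍ[ℝ]) (f : Module.End ℝ ℍ[ℝ]) :
    sandwich c (f * LinearMap.mulLeft ℝ γ) = sandwich c f * γ := by
  simp only [sandwich_apply, Module.End.mul_apply, LinearMap.mulLeft_apply]
  rw [f.apply_quaternion (γ * 1), f.apply_quaternion (γ * quatI), f.apply_quaternion (γ * quatJ),
    f.apply_quaternion (γ * quatK)]
  ext <;> simp <;> ring

theorem four_smul_apply_one_eq_sandwich (f : Module.End ℝ ℍ[ℝ]) :
    (4 : ℝ) • f 1 = sandwich 1 f - sandwich quatI f * quatI - sandwich quatJ f * quatJ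
      - sandwich quatK f * quatK := by
  simp only [sandwich_apply]
  ext <;> simp <;> ring

theorem eq_zero_of_sandwich_eq_zero (f : Module.End ℝ ℍ[ℝ]) (h : ∀ c, sandwich c f = 0) :
    f = 0 := by
  ext q : 1
  have h4 := four_smul_apply_one_eq_sandwich (f * LinearMap.mulLeft ℝ q)
  simp only [sandwich_mul_mulLeft, h, zero_mul, sub_zero, Module.End.mul_apply,
    LinearMap.mulLeft_apply, mul_one] at h4
  simpa using h4

theorem isRightEigenvalue_of_sum_mulLeft_mul_eq {m : ℕ} (B : Matrix (Fin m) (Fin m) ℍ[ℝ])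
    (γ : ℍ[ℝ]) (F : Fin m → Module.End ℝ ℍ[ℝ]) (hF : F ≠ 0)
    (hBF : ∀ s, ∑ t, LinearMap.mulLeft ℝ (B s t) * F t = F s * LinearMap.mulLeft ℝ γ) :
    IsRightEigenvalue B γ := by
  obtain ⟨s, hs⟩ := Function.ne_iff.mp hF
  obtain ⟨c, hc⟩ : ∃ c, sandwich c (F s) ≠ 0 :=
    not_forall.mp (mt (eq_zero_of_sandwich_eq_zero _) hs)
  refine ⟨fun t => sandwich c (F t), fun h0 => hc (congr_fun h0 s), funext fun r => ?_⟩
  calc (B *ᵥ fun t => sandwich c (F t)) r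
      = ∑ t, sandwich c (LinearMap.mulLeft ℝ (B r t) * F t) := by
        simp only [mulVec, dotProduct, sandwich_mulLeft_mul]
    _ = sandwich c (F r) * γ := by rw [← map_sum, hBF, sandwich_mul_mulLeft]

end

/-- Theorem 3.1, right part: if `P(A) = P̃(B)` and `Q(λ) = Q̃(γ)`
for two Hamiltonian triples, then right eigenvalues correspond. -/
theorem right_eigenvalue_of_pRep_eq
    (H J K H' J' K' : Matrix (Fin 4) (Fin 4) ℝ)
    (hH : H * H = -1) (hJ : J * J = -1) (hK : K * K = -1)
    (hHJK : H * J * K = -1)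
    (hH' : H' * H' = -1) (hJ' : J' * J' = -1) (hK' : K' * K' = -1)
    (hHJK' : H' * J' * K' = -1) {m : ℕ}
    (A B : Matrix (Fin m) (Fin m) (Quaternion ℝ))
    (hAB : pRep H J K A = pRep H' J' K' B)
    (l g : Quaternion ℝ) (hlg : qRep H J K l = qRep H' J' K' g)
    (h : IsRightEigenvalue A l) : IsRightEigenvalue B g := by
  obtain ⟨v, hv0, hv⟩ := h
  set Q := qRepAlgHom hH hJ hK hHJK
  set Q' := qRepAlgHom hH' hJ' hK' hHJK'
  set ρ := matrixEndEquiv Q' (one_ne_zero : (1 : Fin 4 → ℝ) ≠ 0)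
  have hBA (s t : Fin m) : Q' (B s t) = Q (A s t) := by
    simpa only [Q, Q', coe_qRepAlgHom] using (qRep_eq_of_pRep_eq hAB s t).symm
  have hgl : Q' g = Q l := by simpa only [Q, Q', coe_qRepAlgHom] using hlg.symm
  have hρ (q : ℍ[ℝ]) : ρ (Q' q) = LinearMap.mulLeft ℝ q := matrixEndEquiv_apply_map Q' _ q
  have hρQ_injective : Function.Injective (ρ ∘ Q) :=
    ρ.injective.comp (RingHom.injective Q.toRingHom)
  refine isRightEigenvalue_of_sum_mulLeft_mul_eq B g (fun t => ρ (Q (v t)))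
    (fun hF => hv0 (funext fun t => hρQ_injective (by simpa using congr_fun hF t))) fun s => ?_
  calc ∑ t, LinearMap.mulLeft ℝ (B s t) * ρ (Q (v t)) = ρ (Q (∑ t, A s t * v t)) := by
        simp only [← hρ, hBA, ← map_mul, map_sum]
    _ = ρ (Q (v s)) * LinearMap.mulLeft ℝ g := by
        rw [← hρ, hgl, ← map_mul, ← map_mul]
        exact congrArg (ρ ∘ Q) (congr_fun hv s)
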